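/- arXiv:1003.4375 — 2 statements merged into one kernel-verified Lean document; each statement's English description precedes it below -/
import Mathlib

section
/- Let B be a nonzero linear differential polynomial belonging to (PS) ∩ K{X}. Then its ID-primitive part IDprim(B) also belongs to (PS) ∩ K{X}. -/
/-!
Since `B ∈ (PS)` vanishes under `xᵢ ↦ Pᵢ(U)` and is a linear element of `K{X}`, it can be written
`B = ∑ 𝓕ᵢ(xᵢ - aᵢ)` with `∑ 𝓕ᵢ Hᵢ = 0`. Let `𝓕ᵢ = 𝓛 𝓛ᵢ` with `𝓛 = IDcont(B)`. Then `𝓛 ≠ 0`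
because `B ≠ 0`, and a nonzero operator is injective on linear forms: it multiplies the
coefficients of highest order by its leading coefficient. Hence `∑ 𝓛ᵢ Hᵢ = 0`, i.e.
`IDprim(B) = ∑ 𝓛ᵢ Fᵢ`. The same leading-term comparison gives `ord 𝓛ᵢ ≤ ord 𝓕ᵢ ≤ N - oᵢ - γ`,
so every `∂ᵏFᵢ` occurring there lies in `PS`.
-/

open MvPolynomial

namespace DPPE

/-- Differential variables: `(Sum.inl i, k)` is the `k`-th derivative of `xᵢ`;
`(Sum.inr j, k)` is the `k`-th derivative of `uⱼ`. -/
abbrev Vr (n : ℕ) := (Fin n ⊕ Fin (n - 1)) × ℕ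

/-- The differential polynomial ring `K{X ∪ U}`. -/
abbrev R (K : Type) [Field K] (n : ℕ) := MvPolynomial (Vr n) K

variable {K : Type} [Field K] {n : ℕ}

/-- The order of `f` in the differential indeterminate `v` (equal to `-1` if absent). -/
noncomputable def ordIn {A : Type} [CommSemiring A] (f : MvPolynomial (Vr n) A)
    (v : Fin n ⊕ Fin (n - 1)) : ℤ :=
  WithBot.unbotD (-1) ((f.vars.filter (fun w => w.1 = v)).image (fun w => (w.2 : ℤ))).max

/-- The (total) order of the differential polynomial `f`. -/
noncomputable def ordTot {A : Type} [CommSemiring A] (f : MvPolynomial (Vr n) A) : ℕ :=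
  WithBot.unbotD 0 (f.vars.image Prod.snd).max

/-- `f` belongs to `K{X}`. -/
def xOnly {A : Type} [CommSemiring A] (f : MvPolynomial (Vr n) A) : Prop :=
  ∀ w ∈ f.vars, (w.1).isLeft

/-- `f` belongs to `K{U}`. -/
def uOnly {A : Type} [CommSemiring A] (f : MvPolynomial (Vr n) A) : Prop :=
  ∀ w ∈ f.vars, (w.1).isRight

/-- `f` is a linear (degree at most 1) differential polynomial. -/
def IsLinearPoly {A : Type} [CommSemiring A] (f : MvPolynomial (Vr n) A) : Prop :=
  f.totalDegree ≤ 1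

/-- The coefficient of the `k`-th derivative of the indeterminate `v` in `f`. -/
noncomputable def cf {A : Type} [CommSemiring A] (f : MvPolynomial (Vr n) A)
    (v : Fin n ⊕ Fin (n - 1)) (k : ℕ) : A :=
  MvPolynomial.coeff (Finsupp.single (v, k) 1) f

/-- An order embedding realizing the ranking `R*` on `X ∪ U` that eliminates `U` with
respect to `X`, orderly on each block, with `x_n < ⋯ < x_1` and `u_1 < ⋯ < u_{n-1}`. -/
def rkk (w : Vr n) : Lex (Bool × Lex (ℕ × ℕ)) :=
  toLex (Sum.elim (fun i => (false, toLex (w.2, (i.rev : ℕ))))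
    (fun j => (true, toLex (w.2, (j : ℕ)))) w.1)

/-- `v` is the lead (highest ranked derivative w.r.t. `R*`) of `g`. -/
def IsLead {A : Type} [CommSemiring A] (g : MvPolynomial (Vr n) A) (v : Vr n) : Prop :=
  v ∈ g.vars ∧ ∀ w ∈ g.vars, rkk w ≤ rkk v

/-- A system `𝒫(X,U)` of `n` linear differential polynomial parametric equations
`xᵢ = Pᵢ(U) = aᵢ - Hᵢ(U)` in `n-1` differential parameters, over an ordinary
differential field `(K, der)`;  `D` is the induced derivation on `K{X ∪ U}`.
`Fᵢ = xᵢ - aᵢ + Hᵢ(U)`. -/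
structure Sys (K : Type) [Field K] (n : ℕ) where
  hn : 2 ≤ n
  der : Derivation ℤ K K
  D : Derivation ℤ (R K n) (R K n)
  hD_C : ∀ c : K, D (C c) = C (der c)
  hD_X : ∀ (v : Fin n ⊕ Fin (n - 1)) (k : ℕ), D (X (v, k)) = X (v, k + 1)
  a : Fin n → K
  H : Fin n → R K n
  H_hom : ∀ i, (H i).IsHomogeneous 1
  H_u : ∀ i, uOnly (H i)
  H_ne : ∃ i, H i ≠ 0
  param : ∀ j : Fin (n - 1), ∃ i, 0 ≤ ordIn (H i) (Sum.inr j)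

namespace Sys

/-- `Fᵢ = xᵢ - aᵢ + Hᵢ(U)`. -/
noncomputable def F (S : Sys K n) (i : Fin n) : R K n :=
  X (Sum.inl i, 0) - C (S.a i) + S.H i

/-- `oᵢ = ord(Fᵢ)`. -/
noncomputable def o (S : Sys K n) (i : Fin n) : ℕ := ordTot (S.F i)

/-- `γⱼ = min_i (oᵢ - ord(Fᵢ, uⱼ))`. -/
noncomputable def gamZ (S : Sys K n) (j : Fin (n - 1)) : ℤ :=
  (Finset.univ : Finset (Fin n)).inf' ⟨⟨0, by have h := S.hn; omega⟩, Finset.mem_univ _⟩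
    fun i => (S.o i : ℤ) - ordIn (S.F i) (Sum.inr j)

noncomputable def gam (S : Sys K n) (j : Fin (n - 1)) : ℕ := (S.gamZ j).toNat

/-- `N = ∑ oᵢ`. -/
noncomputable def Nn (S : Sys K n) : ℕ := ∑ i, S.o i

/-- The completeness index `γ = ∑ γⱼ`. -/
noncomputable def gamT (S : Sys K n) : ℕ := ∑ j, S.gam j

/-- `L = ∑ (N - oᵢ - γ + 1)`. -/
noncomputable def L (S : Sys K n) : ℕ := ∑ i, (S.Nn - S.o i - S.gamT + 1)

/-- `Lʰ = ∑ (N - oᵢ - γ)`. -/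
noncomputable def Lh (S : Sys K n) : ℕ := ∑ i, (S.Nn - S.o i - S.gamT)

/-- The set `PS = {∂^k Fᵢ ∣ 0 ≤ k ≤ N - oᵢ - γ}`. -/
def PSset (S : Sys K n) : Set (R K n) :=
  {g | ∃ i k, k ≤ S.Nn - S.o i - S.gamT ∧ g = (⇑S.D)^[k] (S.F i)}

/-- `f` belongs to the polynomial subring `K[𝒳][𝒱]`. -/
def inXV (S : Sys K n) {A : Type} [CommSemiring A] (f : MvPolynomial (Vr n) A) : Prop :=
  ∀ w ∈ f.vars,
    Sum.elim (fun i => w.2 ≤ S.Nn - S.o i - S.gamT)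
      (fun j => w.2 ≤ S.Nn - S.gam j - S.gamT) w.1

/-- Membership in the ideal `(PS)` generated by `PS` in `K[𝒳][𝒱]`. -/
def PSIdealMem (S : Sys K n) (f : R K n) : Prop :=
  f ∈ Ideal.span S.PSset ∧ S.inXV f

/-- Substitution `x_{ik} ↦ ∂^k(Pᵢ(U))` defining the implicit ideal. -/
noncomputable def subst (S : Sys K n) : R K n →ₐ[K] R K n :=
  aeval fun w =>
    Sum.elim (fun i => (⇑S.D)^[w.2] (C (S.a i) - S.H i)) (fun j => X (Sum.inr j, w.2)) w.1

/-- Membership in the implicit ideal `ID = {f ∈ K{X} ∣ f(P₁(U),…,Pₙ(U)) = 0}`. -/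
def memID (S : Sys K n) (f : R K n) : Prop := xOnly f ∧ S.subst f = 0

/-- Membership in the differential ideal `[A]` of `K{X}` generated by `A ∈ K{X}`. -/
def memDiffSpanX (S : Sys K n) (A f : R K n) : Prop :=
  xOnly f ∧ f ∈ Ideal.span {g | ∃ k, g = (⇑S.D)^[k] A}

/-- `dim ID = n - 1`: the implicit ideal has a characteristic set `{A}` with `A`
a nonzero linear differential polynomial, i.e. `ID = [A]`. -/
def DimFull (S : Sys K n) : Prop :=
  ∃ A : R K n, A ≠ 0 ∧ IsLinearPoly A ∧ xOnly A ∧ ∀ f, (S.memID f ↔ S.memDiffSpanX A f)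

/-- The action of a linear differential operator `Lop = ∑ cₖ ∂^k ∈ K[∂]` on `f`. -/
noncomputable def applyOp (S : Sys K n) (Lop : Polynomial K) (f : R K n) : R K n :=
  ∑ k ∈ Lop.support, C (Lop.coeff k) * (⇑S.D)^[k] f

/-- `Lop` is a left divisor of `Fop` in `K[∂]`. -/
def leftDvd (S : Sys K n) (Lop Fop : Polynomial K) : Prop :=
  ∃ Mop : Polynomial K, ∀ f : R K n, S.applyOp Fop f = S.applyOp Lop (S.applyOp Mop f)

/-- For `B ∈ ID` linear, written `B = ∑ 𝓕ᵢ(xᵢ - aᵢ)`: the operator `𝓕ᵢ ∈ K[∂]`. -/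
noncomputable def opOf (S : Sys K n) (B : R K n) (i : Fin n) : Polynomial K :=
  ∑ k ∈ Finset.range (ordTot B + 1), Polynomial.monomial k (cf B (Sum.inl i) k)

/-- `B` is `ID`-primitive: the greatest common left divisor of `𝓕₁,…,𝓕ₙ` lies in `K`. -/
def IDPrimitive (S : Sys K n) (B : R K n) : Prop :=
  ∀ Lop : Polynomial K, (∀ i, S.leftDvd Lop (S.opOf B i)) → Lop.natDegree = 0

/-- `B'` is an `ID`-primitive part of `B`:  `𝓕ᵢ = IDcont(B)·𝓛ᵢ` with `𝓛₁,…,𝓛ₙ`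
coprime and `B' = ∑ 𝓛ᵢ(xᵢ - aᵢ)`. -/
def IsIDPrimPart (S : Sys K n) (B B' : R K n) : Prop :=
  ∃ (Lop : Polynomial K) (Lfam : Fin n → Polynomial K),
    (∀ i f, S.applyOp (S.opOf B i) f = S.applyOp Lop (S.applyOp (Lfam i) f)) ∧
    (∀ Q : Polynomial K, (∀ i, S.leftDvd Q (Lfam i)) → Q.natDegree = 0) ∧
    B' = ∑ i, S.applyOp (Lfam i) (X (Sum.inl i, 0) - C (S.a i))

/-- The co-order of `B` in `(PS)`: the greatest `c` with `∂^c B ∈ (PS)`. -/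
noncomputable def coOrd (S : Sys K n) (B : R K n) : ℕ :=
  sSup {c : ℕ | S.PSIdealMem ((⇑S.D)^[c] B)}

/-- The leading coefficients vector `l(B) = (α₁,…,αₙ)`, `αᵢ` the coefficient of
`∂^{N - oᵢ - γ - c(B)}` in `𝓕ᵢ`. -/
noncomputable def lvec (S : Sys K n) (B : R K n) : Fin n → K :=
  fun i => cf B (Sum.inl i) (S.Nn - S.o i - S.gamT - S.coOrd B)

/-- The leading matrix `S` of the system: entry `(i,j)` is the coefficient of
`u_{n-j, oᵢ - γ_{n-j}}` in `Fᵢ`. -/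
noncomputable def Smat (S : Sys K n) : Matrix (Fin n) (Fin (n - 1)) K :=
  Matrix.of fun i j =>
    if S.gam j.rev ≤ S.o i then cf (S.F i) (Sum.inr j.rev) (S.o i - S.gam j.rev) else 0

/-- Row indices of the complete differential resultant matrix `M(L)`. -/
abbrev RI (S : Sys K n) := (i : Fin n) × Fin (S.Nn - S.o i - S.gamT + 1)

/-- Column indices corresponding to the variables `𝒱`. -/
abbrev CI (S : Sys K n) := (j : Fin (n - 1)) × Fin (S.Nn - S.gam j - S.gamT + 1)

/-- The principal matrix `M_{L-1}` of the system. -/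
noncomputable def Mprin (S : Sys K n) : Matrix S.RI S.CI K :=
  Matrix.of fun ik jm => cf ((⇑S.D)^[(ik.2 : ℕ)] (S.F ik.1)) (Sum.inr jm.1) (jm.2 : ℕ)

/-- The complete differential resultant matrix `M(L)` (last column holds the parts
`x_{ik} - ∂^k aᵢ`). -/
noncomputable def Mfull (S : Sys K n) : Matrix S.RI (S.CI ⊕ Unit) (R K n) :=
  Matrix.of fun ik c =>
    Sum.elim
      (fun jm => (C (cf ((⇑S.D)^[(ik.2 : ℕ)] (S.F ik.1)) (Sum.inr jm.1) (jm.2 : ℕ)) : R K n))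
      (fun _ => X (Sum.inl ik.1, (ik.2 : ℕ)) - C ((⇑S.der)^[(ik.2 : ℕ)] (S.a ik.1))) c

/-- The linear complete differential resultant `∂CRes(F₁,…,Fₙ) = det M(L)`. -/
noncomputable def dCRes (S : Sys K n) : R K n :=
  if h : Fintype.card (S.CI ⊕ Unit) = Fintype.card S.RI then
    (S.Mfull.submatrix (Fintype.equivOfCardEq h) id).det
  else 0

/-- `G` is the (reduced) Groebner basis associated to the system `𝒫(X,U)`,
w.r.t. the lex monomial order induced by the ranking `R*`. -/
def IsAssocGB (S : Sys K n) (G : Finset (R K n)) : Prop :=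
  (∀ g ∈ G, g ≠ 0 ∧ IsLinearPoly g ∧ S.inXV g ∧ g ∈ Ideal.span S.PSset) ∧
  Ideal.span (G : Set (R K n)) = Ideal.span S.PSset ∧
  (∀ g ∈ G, ∃ v : Vr n, IsLead g v ∧ cf g v.1 v.2 = 1 ∧ ∀ g' ∈ G, g' ≠ g → v ∉ g'.vars) ∧
  (∀ f : R K n, f ∈ Ideal.span S.PSset → S.inXV f → IsLinearPoly f → f ≠ 0 →
    ∃ g ∈ G, ∃ v : Vr n, IsLead g v ∧ IsLead f v)

end Sys

/-- `G₀ = G ∩ K{X}`. -/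
noncomputable def G0 (G : Finset (R K n)) : Finset (R K n) :=
  @Finset.filter _ (fun g => xOnly g) (Classical.decPred _) G

end DPPE

namespace MvPolynomial

variable {σ R : Type*} [CommSemiring R]

theorem eq_of_totalDegree_le_one {f g : MvPolynomial σ R} (hf : f.totalDegree ≤ 1)
    (hg : g.totalDegree ≤ 1) (h0 : coeff 0 f = coeff 0 g)
    (h1 : ∀ i, coeff (Finsupp.single i 1) f = coeff (Finsupp.single i 1) g) : f = g := by
  ext d
  rcases Nat.lt_or_ge 1 d.degree with hd | hd
  · rw [coeff_eq_zero_of_totalDegree_lt (hf.trans_lt hd),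
      coeff_eq_zero_of_totalDegree_lt (hg.trans_lt hd)]
  rcases Nat.le_one_iff_eq_zero_or_eq_one.mp hd with hd | hd
  · rwa [(Finsupp.degree_eq_zero_iff d).mp hd]
  · obtain ⟨i, rfl⟩ : d ∈ Set.range (Finsupp.single · 1) := Finsupp.range_single_one ▸ hd
    exact h1 i

theorem IsHomogeneous.exists_coeff_single_ne_zero {f : MvPolynomial σ R} (hf : f.IsHomogeneous 1)
    (hf0 : f ≠ 0) : ∃ i, coeff (Finsupp.single i 1) f ≠ 0 := by
  by_contra! h
  exact hf0 (eq_of_totalDegree_le_one hf.totalDegree_le (by simp) (hf.coeff_eq_zero (by simp))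
    (by simpa using h))

theorem mem_vars_of_coeff_single_ne_zero {f : MvPolynomial σ R} {i : σ}
    (h : coeff (Finsupp.single i 1) f ≠ 0) : i ∈ f.vars :=
  (mem_vars_iff_mem_support i).mpr ⟨_, mem_support_iff.mpr h, by simp⟩

theorem coeff_single_one_mul_X [DecidableEq σ] (p : MvPolynomial σ R) (i j : σ) :
    coeff (Finsupp.single j 1) (p * X i) = if i = j then constantCoeff p else 0 := by
  rw [coeff_mul_X']
  by_cases h : i = j
  · subst h; simp [constantCoeff_eq]
  · simp [h]

end MvPolynomial

namespace DPPE

variable {K : Type} [Field K] {n : ℕ}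

theorem snd_le_ordTot {f : R K n} {w : Vr n} (h : w ∈ f.vars) : w.2 ≤ ordTot f := by
  obtain ⟨m, hm⟩ := Finset.max_of_mem (Finset.mem_image_of_mem Prod.snd h)
  have := Finset.le_max_of_eq (Finset.mem_image_of_mem Prod.snd h) hm
  simpa [ordTot, hm] using this

theorem cf_eq_zero_of_ordTot_lt {f : R K n} {v : Fin n ⊕ Fin (n - 1)} {k : ℕ}
    (h : ordTot f < k) : cf f v k = 0 := by
  by_contra hne
  have := snd_le_ordTot (mem_vars_of_coeff_single_ne_zero hne)
  simp at this
  omega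

theorem exists_top_cf_ne_zero {f : R K n} (h : ∃ v t, cf f v t ≠ 0) :
    ∃ m v, cf f v m ≠ 0 ∧ ∀ v t, m < t → cf f v t = 0 := by
  classical
  obtain ⟨v, t, hvt⟩ := h
  obtain ⟨w, hw, hmax⟩ := (f.vars.filter fun w => cf f w.1 w.2 ≠ 0).exists_max_image Prod.snd
    ⟨(v, t), Finset.mem_filter.mpr ⟨mem_vars_of_coeff_single_ne_zero hvt, hvt⟩⟩
  refine ⟨w.2, w.1, (Finset.mem_filter.mp hw).2, fun v' t' ht' => ?_⟩
  by_contra hne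
  have := hmax (v', t') (Finset.mem_filter.mpr ⟨mem_vars_of_coeff_single_ne_zero hne, hne⟩)
  omega

namespace Sys

variable (S : Sys K n)

theorem D_iterate_X (v : Fin n ⊕ Fin (n - 1)) (k : ℕ) :
    (⇑S.D)^[k] (X (v, 0)) = (X (v, k) : R K n) := by
  induction k with
  | zero => rfl
  | succ k ih => rw [Function.iterate_succ_apply', ih, S.hD_X]

theorem D_iterate_C (a : K) (k : ℕ) : (⇑S.D)^[k] (C a : R K n) = C (S.der^[k] a) := by
  induction k with
  | zero => rfl
  | succ k ih => rw [Function.iterate_succ_apply', ih, S.hD_C, Function.iterate_succ_apply']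

theorem constantCoeff_D (f : R K n) : constantCoeff (S.D f) = S.der (constantCoeff f) := by
  induction f using MvPolynomial.induction_on with
  | C a => simp [S.hD_C]
  | add p q hp hq => simp [hp, hq]
  | mul_X p w hp => simp [Derivation.leibniz, S.hD_X, mul_comm (X w)]

theorem cf_D_succ (f : R K n) (v : Fin n ⊕ Fin (n - 1)) (k : ℕ) :
    cf (S.D f) v (k + 1) = S.der (cf f v (k + 1)) + cf f v k := by
  classical
  induction f using MvPolynomial.induction_on with
  | C a => simp [cf, S.hD_C, coeff_C, eq_comm (a := (0 : Vr n →₀ ℕ))]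
  | add p q hp hq => simp only [cf, map_add, coeff_add] at *; rw [hp, hq]; ring
  | mul_X p w hp =>
    obtain ⟨u, m⟩ := w
    rw [cf, Derivation.leibniz, S.hD_X, smul_eq_mul, smul_eq_mul, mul_comm (X _), coeff_add,
      cf, cf, coeff_single_one_mul_X, coeff_single_one_mul_X, coeff_single_one_mul_X,
      coeff_single_one_mul_X, constantCoeff_D]
    split_ifs <;> simp_all

theorem isHomogeneous_D {f : R K n} (hf : f.IsHomogeneous 1) : (S.D f).IsHomogeneous 1 := by
  rw [← mem_homogeneousSubmodule, homogeneousSubmodule_one_eq_span_X] at hf ⊢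
  induction hf using Submodule.span_induction with
  | mem x hx =>
    obtain ⟨⟨v, k⟩, rfl⟩ := hx
    rw [S.hD_X]
    exact Submodule.subset_span ⟨_, rfl⟩
  | zero => simp
  | add x y _ _ hx hy => rw [map_add]; exact add_mem hx hy
  | smul a x hx0 hx =>
    rw [smul_eq_C_mul, Derivation.leibniz, S.hD_C, smul_eq_mul, smul_eq_mul, ← smul_eq_C_mul,
      mul_comm, ← smul_eq_C_mul]
    exact add_mem (Submodule.smul_mem _ _ hx) (Submodule.smul_mem _ _ hx0)

noncomputable def opEnd (L : Polynomial K) : Module.End ℤ (R K n) :=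
  ∑ k ∈ L.support, LinearMap.mulLeft ℤ (C (L.coeff k) : R K n) * (S.D : Module.End ℤ (R K n)) ^ k

theorem applyOp_eq_opEnd (L : Polynomial K) : S.applyOp L = S.opEnd L := by
  funext f
  simp [applyOp, opEnd, Module.End.pow_apply]

theorem applyOp_sub (L : Polynomial K) (f g : R K n) :
    S.applyOp L (f - g) = S.applyOp L f - S.applyOp L g := by
  simp only [applyOp_eq_opEnd, map_sub]

theorem applyOp_neg (L : Polynomial K) (f : R K n) : S.applyOp L (-f) = -S.applyOp L f := by
  simp only [applyOp_eq_opEnd, map_neg]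

theorem applyOp_sum {ι : Type*} (L : Polynomial K) (s : Finset ι) (f : ι → R K n) :
    S.applyOp L (∑ i ∈ s, f i) = ∑ i ∈ s, S.applyOp L (f i) := by
  simp only [applyOp_eq_opEnd, map_sum]

theorem applyOp_zero_left (f : R K n) : S.applyOp 0 f = 0 := by
  simp [applyOp]

theorem applyOp_C (L : Polynomial K) (a : K) :
    S.applyOp L (C a) = C (∑ k ∈ L.support, L.coeff k * S.der^[k] a) := by
  simp [applyOp, D_iterate_C]

theorem isHomogeneous_applyOp (L : Polynomial K) {f : R K n} (hf : f.IsHomogeneous 1) :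
    (S.applyOp L f).IsHomogeneous 1 :=
  IsHomogeneous.sum _ _ _ fun k _ =>
    (Function.Iterate.rec (fun g : R K n => g.IsHomogeneous 1) hf (fun _ => S.isHomogeneous_D) k
      |>.C_mul _)

theorem cf_applyOp (L : Polynomial K) (f : R K n) (v : Fin n ⊕ Fin (n - 1)) (t : ℕ) :
    cf (S.applyOp L f) v t = ∑ k ∈ L.support, L.coeff k * cf ((⇑S.D)^[k] f) v t := by
  simp [applyOp, cf, coeff_sum, coeff_C_mul]

theorem cf_applyOp_X (L : Polynomial K) (v v' : Fin n ⊕ Fin (n - 1)) (t : ℕ) :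
    cf (S.applyOp L (X (v, 0))) v' t = if v' = v then L.coeff t else 0 := by
  rw [cf_applyOp]
  simp_rw [D_iterate_X]
  simp only [cf, coeff_single_X, Prod.mk.injEq, true_and, mul_ite, mul_one, mul_zero]
  by_cases hv : v' = v
  · subst hv
    simp [eq_comm]
  · simp [hv, Ne.symm hv]

section HighestOrder

variable {f : R K n} {m : ℕ} (hf : ∀ v t, m < t → cf f v t = 0)
include hf

theorem cf_D_iterate_eq_zero (k : ℕ) : ∀ v t, m + k < t → cf ((⇑S.D)^[k] f) v t = 0 := by
  induction k with
  | zero => simpa using hf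
  | succ k ih =>
    intro v t ht
    obtain ⟨t, rfl⟩ : ∃ s, t = s + 1 := ⟨t - 1, by omega⟩
    rw [Function.iterate_succ_apply', cf_D_succ, ih v _ (by omega), ih v _ (by omega), map_zero,
      add_zero]

theorem cf_D_iterate_add (k : ℕ) (v : Fin n ⊕ Fin (n - 1)) :
    cf ((⇑S.D)^[k] f) v (m + k) = cf f v m := by
  induction k with
  | zero => rfl
  | succ k ih =>
    rw [Function.iterate_succ_apply', ← add_assoc, cf_D_succ,
      S.cf_D_iterate_eq_zero hf k v _ (by omega), map_zero, zero_add, ih]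

theorem cf_applyOp_add_natDegree (L : Polynomial K) (v : Fin n ⊕ Fin (n - 1)) :
    cf (S.applyOp L f) v (m + L.natDegree) = L.leadingCoeff * cf f v m := by
  rw [cf_applyOp, Finset.sum_eq_single L.natDegree]
  · rw [S.cf_D_iterate_add hf]
    rfl
  · intro k hk hne
    have := Polynomial.le_natDegree_of_mem_supp k hk
    rw [S.cf_D_iterate_eq_zero hf k v _ (by omega), mul_zero]
  · intro h
    rw [Polynomial.notMem_support_iff.mp h, zero_mul]

end HighestOrder

theorem eq_zero_of_applyOp_eq_zero {L : Polynomial K} (hL : L ≠ 0) {f : R K n}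
    (hf : f.IsHomogeneous 1) (hLf : S.applyOp L f = 0) : f = 0 := by
  by_contra hf0
  obtain ⟨w, hw⟩ := hf.exists_coeff_single_ne_zero hf0
  obtain ⟨m, v, hv, htop⟩ := exists_top_cf_ne_zero ⟨w.1, w.2, hw⟩
  have := S.cf_applyOp_add_natDegree htop L v
  rw [hLf, cf, coeff_zero, eq_comm, mul_eq_zero] at this
  exact this.elim (Polynomial.leadingCoeff_ne_zero.mpr hL) hv

theorem natDegree_le_of_applyOp_X_eq {Lop L M : Polynomial K} (hLop : Lop ≠ 0)
    {v : Fin n ⊕ Fin (n - 1)}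
    (h : S.applyOp M (X (v, 0)) = S.applyOp Lop (S.applyOp L (X (v, 0)))) :
    L.natDegree ≤ M.natDegree := by
  rcases eq_or_ne L 0 with rfl | hL
  · simp
  have htop : ∀ v' t, L.natDegree < t → cf (S.applyOp L (X (v, 0))) v' t = 0 := by
    intro v' t ht
    rw [cf_applyOp_X]
    split_ifs <;> simp [Polynomial.coeff_eq_zero_of_natDegree_lt ht]
  have hM := S.cf_applyOp_add_natDegree htop Lop v
  rw [← h, cf_applyOp_X, if_pos rfl, cf_applyOp_X, if_pos rfl,
    Polynomial.coeff_natDegree] at hM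
  have hM0 : M.coeff (L.natDegree + Lop.natDegree) ≠ 0 := by
    rw [hM]
    exact mul_ne_zero (Polynomial.leadingCoeff_ne_zero.mpr hLop)
      (Polynomial.leadingCoeff_ne_zero.mpr hL)
  have := Polynomial.le_natDegree_of_ne_zero hM0
  omega

theorem subst_C (a : K) : S.subst (C a) = C a := by
  simp [subst]

theorem subst_X_inl (i : Fin n) (k : ℕ) :
    S.subst (X (Sum.inl i, k)) = (⇑S.D)^[k] (C (S.a i) - S.H i) := by
  simp [subst]

theorem subst_D (f : R K n) : S.subst (S.D f) = S.D (S.subst f) := by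
  induction f using MvPolynomial.induction_on with
  | C a => rw [S.hD_C, subst_C, subst_C, S.hD_C]
  | add p q hp hq => rw [map_add, map_add, map_add, hp, hq, map_add]
  | mul_X p w hp =>
    obtain ⟨v, k⟩ := w
    have hX : S.subst (X (v, k + 1)) = S.D (S.subst (X (v, k))) := by
      cases v <;> simp [subst, Function.iterate_succ_apply', S.hD_X]
    simp only [Derivation.leibniz, smul_eq_mul, S.hD_X, map_add, map_mul, hp, hX]

theorem subst_D_iterate (k : ℕ) (f : R K n) :
    S.subst ((⇑S.D)^[k] f) = (⇑S.D)^[k] (S.subst f) :=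
  Function.Commute.iterate_right (f := S.subst) S.subst_D k f

theorem subst_applyOp (L : Polynomial K) (f : R K n) :
    S.subst (S.applyOp L f) = S.applyOp L (S.subst f) := by
  simp [applyOp, subst_D_iterate]

theorem subst_eq_self_of_uOnly {f : R K n} (hf : uOnly f) : S.subst f = f := by
  refine hom_congr_vars (f₁ := S.subst.toRingHom) (f₂ := RingHom.id _) ?_ ?_ rfl
  · ext a
    simp
  · rintro ⟨v, k⟩ hw -
    obtain ⟨j, rfl⟩ := Sum.isRight_iff.mp (hf _ hw)
    simp [subst]

theorem subst_F (i : Fin n) : S.subst (S.F i) = 0 := by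
  simp [F, subst_X_inl, S.subst_eq_self_of_uOnly (S.H_u i)]

theorem subst_eq_zero_of_mem_span {f : R K n} (hf : f ∈ Ideal.span S.PSset) : S.subst f = 0 := by
  have hPS : S.PSset ⊆ RingHom.ker S.subst := by
    rintro g ⟨i, k, -, rfl⟩
    simp [RingHom.mem_ker, subst_D_iterate, subst_F]
  exact (Ideal.span_le.mpr hPS) hf

theorem coeff_opOf (B : R K n) (i : Fin n) (k : ℕ) :
    (S.opOf B i).coeff k = cf B (Sum.inl i) k := by
  simp only [opOf, Polynomial.finsetSum_coeff, Polynomial.coeff_monomial,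
    Finset.sum_ite_eq', Finset.mem_range]
  split_ifs with hk
  · rfl
  · exact (cf_eq_zero_of_ordTot_lt (by omega)).symm

theorem natDegree_opOf_le {B : R K n} (hB : S.inXV B) (i : Fin n) :
    (S.opOf B i).natDegree ≤ S.Nn - S.o i - S.gamT := by
  rw [Polynomial.natDegree_le_iff_coeff_eq_zero]
  intro k hk
  rw [coeff_opOf]
  by_contra hne
  have := hB _ (mem_vars_of_coeff_single_ne_zero hne)
  simp only [Sum.elim_inl] at this
  omega

theorem eq_sum_applyOp_opOf_X_add_C {B : R K n} (hlin : IsLinearPoly B) (hx : xOnly B) :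
    B = ∑ i, S.applyOp (S.opOf B i) (X (Sum.inl i, 0)) + C (coeff 0 B) := by
  have hP : (∑ i, S.applyOp (S.opOf B i) (X (Sum.inl i, 0))).IsHomogeneous 1 :=
    IsHomogeneous.sum _ _ _ fun i _ => S.isHomogeneous_applyOp _ (isHomogeneous_X K _)
  refine eq_of_totalDegree_le_one hlin
    ((totalDegree_add _ _).trans (max_le hP.totalDegree_le (by simp))) ?_ fun ⟨v, t⟩ => ?_
  · simp [hP.coeff_eq_zero (d := 0) (by simp)]
  have hterm : ∀ i, coeff (Finsupp.single (v, t) 1) (S.applyOp (S.opOf B i) (X (Sum.inl i, 0)))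
      = if v = Sum.inl i then (S.opOf B i).coeff t else 0 :=
    fun i => S.cf_applyOp_X _ _ v t
  have h0 : (0 : Vr n →₀ ℕ) ≠ Finsupp.single (v, t) 1 :=
    (Finsupp.single_ne_zero.mpr one_ne_zero).symm
  simp only [coeff_add, coeff_sum, hterm, coeff_C, if_neg h0, add_zero]
  rcases v with i | j
  · simp [coeff_opOf, cf]
  · simp only [reduceCtorEq, if_false, Finset.sum_const_zero]
    by_contra hne
    simpa using hx _ (mem_vars_of_coeff_single_ne_zero hne)

noncomputable def comb (M : Fin n → Polynomial K) : R K n :=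
  ∑ i, S.applyOp (M i) (X (Sum.inl i, 0) - C (S.a i))

theorem isHomogeneous_sum_applyOp_H (M : Fin n → Polynomial K) :
    (∑ i, S.applyOp (M i) (S.H i)).IsHomogeneous 1 :=
  IsHomogeneous.sum _ _ _ fun i _ => S.isHomogeneous_applyOp _ (S.H_hom i)

theorem comb_eq_sub (M : Fin n → Polynomial K) :
    S.comb M = ∑ i, S.applyOp (M i) (S.F i) - ∑ i, S.applyOp (M i) (S.H i) := by
  simp only [comb, F, ← Finset.sum_sub_distrib, ← applyOp_sub, add_sub_cancel_right]

theorem subst_comb (M : Fin n → Polynomial K) :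
    S.subst (S.comb M) = -∑ i, S.applyOp (M i) (S.H i) := by
  simp [comb, subst_applyOp, subst_X_inl, applyOp_neg]

theorem applyOp_comb {Lop : Polynomial K} {L M : Fin n → Polynomial K}
    (h : ∀ i f, S.applyOp (M i) f = S.applyOp Lop (S.applyOp (L i) f)) :
    S.applyOp Lop (S.comb L) = S.comb M := by
  simp only [comb, applyOp_sum, h]

theorem eq_comb_opOf {B : R K n} (hlin : IsLinearPoly B) (hx : xOnly B) (hB : S.subst B = 0) :
    B = S.comb (S.opOf B) := by
  obtain ⟨c, hc⟩ : ∃ c, S.comb (S.opOf B) = ∑ i, S.applyOp (S.opOf B i) (X (Sum.inl i, 0)) - C c :=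
    ⟨_, by simp only [comb, applyOp_sub, applyOp_C, Finset.sum_sub_distrib, ← map_sum]; rfl⟩
  have hBc : B = S.comb (S.opOf B) + C (coeff 0 B + c) := by
    rw [hc, map_add]
    conv_lhs => rw [S.eq_sum_applyOp_opOf_X_add_C hlin hx]
    ring
  have hconst : coeff 0 B + c = 0 := by
    have := congrArg (coeff 0 ∘ S.subst) hBc
    simpa [hB, subst_comb, subst_C,
      (S.isHomogeneous_sum_applyOp_H _).coeff_eq_zero (d := 0) (by simp)] using this.symm
  conv_lhs => rw [hBc, hconst, map_zero, add_zero]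

theorem sum_applyOp_F_mem_span {M : Fin n → Polynomial K}
    (hM : ∀ i, (M i).natDegree ≤ S.Nn - S.o i - S.gamT) :
    ∑ i, S.applyOp (M i) (S.F i) ∈ Ideal.span S.PSset :=
  Ideal.sum_mem _ fun i _ => Ideal.sum_mem _ fun k hk => Ideal.mul_mem_left _ _ <|
    Ideal.subset_span ⟨i, k, (Polynomial.le_natDegree_of_mem_supp k hk).trans (hM i), rfl⟩

theorem vars_comb {M : Fin n → Polynomial K} {w : Vr n} (hw : w ∈ (S.comb M).vars) :
    ∃ i, w.1 = Sum.inl i ∧ w.2 ∈ (M i).support := by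
  classical
  obtain ⟨i, -, hi⟩ := Finset.mem_biUnion.mp (vars_sum_subset _ _ hw)
  obtain ⟨k, hk, hwk⟩ := Finset.mem_biUnion.mp (vars_sum_subset _ _ hi)
  rw [iterate_map_sub, D_iterate_X, D_iterate_C] at hwk
  obtain rfl : w = (Sum.inl i, k) := by simpa using vars_mul _ _ hwk
  exact ⟨i, rfl, hk⟩

theorem psIdealMem_comb {M : Fin n → Polynomial K}
    (hM : ∀ i, (M i).natDegree ≤ S.Nn - S.o i - S.gamT)
    (hH : ∑ i, S.applyOp (M i) (S.H i) = 0) : S.PSIdealMem (S.comb M) := by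
  refine ⟨by simpa [comb_eq_sub, hH] using S.sum_applyOp_F_mem_span hM, fun w hw => ?_⟩
  obtain ⟨i, hi, hk⟩ := S.vars_comb hw
  rw [hi]
  exact (Polynomial.le_natDegree_of_mem_supp _ hk).trans (hM i)

theorem xOnly_comb (M : Fin n → Polynomial K) : xOnly (S.comb M) := fun w hw => by
  obtain ⟨i, hi, -⟩ := S.vars_comb hw
  rw [hi]
  rfl

end Sys

/-- Let `B` be a nonzero linear differential polynomial belonging to
`(PS) ∩ K{X}`. Then its `ID`-primitive part `IDprim(B)` also belongs to `(PS) ∩ K{X}`. -/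
theorem statement_0 {K : Type} [Field K] {n : ℕ} (S : Sys K n) (B B' : R K n)
    (hB0 : B ≠ 0) (hBlin : IsLinearPoly B) (hBPS : S.PSIdealMem B) (hBx : xOnly B)
    (hprim : S.IsIDPrimPart B B') :
    S.PSIdealMem B' ∧ xOnly B' := by
  obtain ⟨Lop, L, hcomp, -, rfl⟩ := hprim
  have hsubst := S.subst_eq_zero_of_mem_span hBPS.1
  have hB : B = S.comb (S.opOf B) := S.eq_comb_opOf hBlin hBx hsubst
  have hopOf : ∑ i, S.applyOp (S.opOf B i) (S.H i) = 0 := by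
    simpa [← hB, hsubst] using S.subst_comb (S.opOf B)
  have hLop : Lop ≠ 0 := by
    rintro rfl
    exact hB0 (by rw [hB, ← S.applyOp_comb hcomp, Sys.applyOp_zero_left])
  have hL : ∑ i, S.applyOp (L i) (S.H i) = 0 := by
    refine S.eq_zero_of_applyOp_eq_zero hLop (S.isHomogeneous_sum_applyOp_H L) ?_
    simpa [Sys.applyOp_sum, ← hcomp] using hopOf
  have hdeg : ∀ i, (L i).natDegree ≤ S.Nn - S.o i - S.gamT := fun i =>
    (S.natDegree_le_of_applyOp_X_eq hLop (hcomp i (X (Sum.inl i, 0)))).trans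
      (S.natDegree_opOf_le hBPS.2 i)
  exact ⟨S.psIdealMem_comb hdeg hL, S.xOnly_comb L⟩

end DPPE
end

section
/- The number of elements of G₀ = G ∩ K{X} equals L − rank(M_{L−1}), where M_{L−1} is the principal matrix of P(X,U). -/
open MvPolynomial

/-!
A linear polynomial lying in the ideal generated by finitely many linear polynomials in reduced
echelon form (each has a pivot variable, with coefficient `1`, occurring in no other one) lies in
their `K`-linear span: substituting `p - g` for the pivot `p` of each `g` kills the ideal but fixes
every polynomial free of pivots. Both `PS` (pivots `x_{ik}`) and `G` (pivots its leads) are such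
families generating the same ideal, so they span the same `K`-space `W`, of dimension `L`, and
`|G| = L`. The rows of `M_{L-1}` are the `𝒱`-coefficient vectors of `PS`, so its rank is the
dimension of the image of `W` under the `𝒱`-coefficient map. That map kills `G₀`, while the leads of
the elements of `G \ G₀` are distinct derivatives in `𝒱`, so their images are independent; hence
`rank M_{L-1} = |G| - |G₀|`.
-/

section Pivots

variable {σ ι 𝕜 M : Type*} [Field 𝕜]

theorem MvPolynomial.mem_vars_of_coeff_single_ne_zero_s3 {R : Type*} [CommSemiring R]
    {f : MvPolynomial σ R} {w : σ} (h : coeff (Finsupp.single w 1) f ≠ 0) : w ∈ f.vars :=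
  (mem_vars_iff_mem_support w).2 ⟨_, mem_support_iff.2 h, by simp⟩

theorem MvPolynomial.coeff_single_ne_zero_iff_mem_vars {R : Type*} [CommSemiring R]
    {f : MvPolynomial σ R} (hf : f.totalDegree ≤ 1) {w : σ} :
    coeff (Finsupp.single w 1) f ≠ 0 ↔ w ∈ f.vars := by
  refine ⟨mem_vars_of_coeff_single_ne_zero_s3, fun hw => ?_⟩
  obtain ⟨m, hm, hwm⟩ := (mem_vars_iff_mem_support w).1 hw
  have hle : Finsupp.single w 1 ≤ m :=
    Finsupp.single_le_iff.2 (Nat.one_le_iff_ne_zero.2 (Finsupp.mem_support_iff.1 hwm))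
  have hdeg : m.degree ≤ 1 := (le_totalDegree hm).trans hf
  have hrest : (m - Finsupp.single w 1).degree = 0 := by
    have := map_add Finsupp.degree (Finsupp.single w 1) (m - Finsupp.single w 1)
    rw [add_tsub_cancel_of_le hle, Finsupp.degree_single] at this
    omega
  rw [Finsupp.degree_eq_zero_iff, tsub_eq_zero_iff_le] at hrest
  rwa [← mem_support_iff, ← hrest.antisymm hle]

theorem MvPolynomial.mem_span_X_image_of_isHomogeneous_one {R : Type*} [CommSemiring R]
    {f : MvPolynomial σ R} {s : Set σ} (hf : f.IsHomogeneous 1) (hs : ↑f.vars ⊆ s) :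
    f ∈ Submodule.span R (X '' s) := by
  obtain ⟨f, rfl⟩ : f ∈ (rename ((↑) : s → σ)).range :=
    supported_eq_range_rename (R := R) s ▸ mem_supported.2 hs
  have hf' : f ∈ Submodule.span R (Set.range X) := by
    rw [← homogeneousSubmodule_one_eq_span_X, mem_homogeneousSubmodule]
    exact (IsHomogeneous.rename_isHomogeneous_iff Subtype.val_injective).1 hf
  have := Submodule.mem_map_of_mem (f := (rename ((↑) : s → σ)).toLinearMap) hf'
  rw [Submodule.map_span, ← Set.range_comp] at this
  refine Submodule.span_mono ?_ this
  rintro _ ⟨w, rfl⟩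
  exact ⟨w, w.2, by simp⟩

structure MvPolynomial.HasPivots (g : ι → MvPolynomial σ 𝕜) (p : ι → σ) : Prop where
  coeff_self : ∀ i, coeff (Finsupp.single (p i) 1) (g i) = 1
  coeff_of_ne : Pairwise fun i j => coeff (Finsupp.single (p i) 1) (g j) = 0

namespace MvPolynomial.HasPivots

variable {g : ι → MvPolynomial σ 𝕜} {p : ι → σ}

theorem injective (h : HasPivots g p) : Function.Injective p := by
  intro i j hij
  by_contra hne
  have : coeff (Finsupp.single (p i) 1) (g j) = 0 := h.coeff_of_ne hne
  rw [hij, h.coeff_self] at this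
  exact one_ne_zero this

theorem comp (h : HasPivots g p) {κ : Type*} {e : κ → ι} (he : Function.Injective e) :
    HasPivots (g ∘ e) (p ∘ e) :=
  ⟨fun i => h.coeff_self (e i), fun _ _ hij => h.coeff_of_ne (he.ne hij)⟩

theorem linearIndependent_comp [AddCommGroup M] [Module 𝕜 M] (h : HasPivots g p)
    (ρ : MvPolynomial σ 𝕜 →ₗ[𝕜] M) (φ : ι → Module.Dual 𝕜 M)
    (hφ : ∀ i f, φ i (ρ f) = coeff (Finsupp.single (p i) 1) f) :
    LinearIndependent 𝕜 (ρ ∘ g) :=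
  .of_pairwise_dual_eq_zero_one _ φ (fun i _ hij => (hφ i _).trans (h.coeff_of_ne hij))
    (fun i => (hφ i _).trans (h.coeff_self i))

theorem linearIndependent (h : HasPivots g p) : LinearIndependent 𝕜 g :=
  h.linearIndependent_comp LinearMap.id (fun i => lcoeff 𝕜 (Finsupp.single (p i) 1))
    fun _ _ => rfl

theorem eq_zero_of_mem_ideal (h : HasPivots g p) (hg : ∀ i, (g i).totalDegree ≤ 1)
    {r : MvPolynomial σ 𝕜} (hr : ∀ i, p i ∉ r.vars) (hI : r ∈ Ideal.span (Set.range g)) :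
    r = 0 := by
  classical
  set ψ := aeval (R := 𝕜) (Function.extend p (fun i => X (p i) - g i) X)
  have hfix : ∀ q, (∀ i, p i ∉ q.vars) → ψ q = q := by
    intro q hq
    refine hom_congr_vars (f₂ := RingHom.id _) (by ext; simp [ψ]) (fun w hw _ => ?_) rfl
    have hw' : ¬ ∃ i, p i = w := fun ⟨i, hi⟩ => hq i (hi ▸ hw)
    simp [ψ, Function.extend_apply' _ _ _ hw']
  have hkill : ∀ i, ψ (g i) = 0 := by
    intro i
    have htail : ∀ j, p j ∉ (g i - X (p i)).vars := by
      intro j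
      rw [← coeff_single_ne_zero_iff_mem_vars
        ((totalDegree_sub _ _).trans (max_le (hg i) (totalDegree_X _).le)), not_not,
        coeff_sub, coeff_X]
      rcases eq_or_ne j i with rfl | hji
      · simp [h.coeff_self]
      · simp [h.coeff_of_ne hji, Finsupp.single_left_inj, h.injective.ne hji.symm]
    have hψX : ψ (X (p i)) = X (p i) - g i := by
      simp [ψ, h.injective.extend_apply]
    calc ψ (g i) = ψ (X (p i)) + ψ (g i - X (p i)) := by rw [← map_add, add_sub_cancel]
      _ = 0 := by rw [hψX, hfix _ htail, sub_add_sub_cancel', sub_self]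
  have hker : Ideal.span (Set.range g) ≤ RingHom.ker ψ :=
    Ideal.span_le.2 (Set.range_subset_iff.2 hkill)
  rw [← hfix r hr]
  exact hker hI

theorem mem_span_of_mem_ideal [Fintype ι] (h : HasPivots g p) (hg : ∀ i, (g i).totalDegree ≤ 1)
    {f : MvPolynomial σ 𝕜} (hf : f.totalDegree ≤ 1) (hI : f ∈ Ideal.span (Set.range g)) :
    f ∈ Submodule.span 𝕜 (Set.range g) := by
  set r := f - ∑ i, coeff (Finsupp.single (p i) 1) f • g i
  have hlin : r ∈ restrictTotalDegree σ 𝕜 1 :=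
    sub_mem ((mem_restrictTotalDegree _ _ _).2 hf)
      (sum_mem fun i _ => Submodule.smul_mem _ _ ((mem_restrictTotalDegree _ _ _).2 (hg i)))
  have hrI : r ∈ Ideal.span (Set.range g) :=
    sub_mem hI (sum_mem fun i _ => Submodule.smul_of_tower_mem _ _
      (Ideal.subset_span (Set.mem_range_self i)))
  have hr : ∀ j, p j ∉ r.vars := by
    intro j
    rw [← coeff_single_ne_zero_iff_mem_vars ((mem_restrictTotalDegree _ _ _).1 hlin), not_not]
    simp only [r, coeff_sub, coeff_sum, coeff_smul, smul_eq_mul]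
    rw [Finset.sum_eq_single j (fun i _ hij => by rw [h.coeff_of_ne hij.symm, mul_zero])
      (by simp), h.coeff_self, mul_one, sub_self]
  have hr0 : r = 0 := h.eq_zero_of_mem_ideal hg hr hrI
  rw [sub_eq_zero.1 hr0]
  exact sum_mem fun i _ => Submodule.smul_mem _ _ (Submodule.subset_span (Set.mem_range_self i))

end MvPolynomial.HasPivots

end Pivots

namespace DPPE

variable {K : Type} [Field K] {n : ℕ}

/-- The linear homogeneous part of `K{U}`. -/
noncomputable def uLinear (K : Type) [Field K] (n : ℕ) : Submodule K (R K n) :=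
  Submodule.span K (X '' {w | w.1.isRight})

theorem totalDegree_le_one_of_mem_uLinear {f : R K n} (hf : f ∈ uLinear K n) :
    f.totalDegree ≤ 1 := by
  refine (mem_restrictTotalDegree (R := K) _ 1 f).1 (Submodule.span_le.2 ?_ hf)
  rintro _ ⟨w, -, rfl⟩
  exact (mem_restrictTotalDegree _ _ _).2 (totalDegree_X w).le

theorem coeff_inl_eq_zero_of_mem_uLinear {f : R K n} (hf : f ∈ uLinear K n) (i : Fin n)
    (k : ℕ) : coeff (Finsupp.single (Sum.inl i, k) 1) f = 0 := by
  refine (LinearMap.mem_ker (f := lcoeff K _)).1 (Submodule.span_le.2 ?_ hf)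
  rintro _ ⟨w, hw, rfl⟩
  have : w ≠ (Sum.inl i, k) := by rintro rfl; simp at hw
  simp [coeff_X, Finsupp.single_left_inj, this]

namespace Sys

variable (S : Sys K n)

theorem H_mem_uLinear (i : Fin n) : S.H i ∈ uLinear K n :=
  mem_span_X_image_of_isHomogeneous_one (S.H_hom i) (S.H_u i)

theorem D_mem_uLinear {f : R K n} (hf : f ∈ uLinear K n) : S.D f ∈ uLinear K n := by
  induction hf using Submodule.span_induction with
  | mem x hx =>
    obtain ⟨⟨v, k⟩, hv, rfl⟩ := hx
    rw [S.hD_X]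
    exact Submodule.subset_span ⟨(v, k + 1), hv, rfl⟩
  | zero => simp
  | add x y _ _ hx hy => rw [map_add]; exact add_mem hx hy
  | smul c x hx ihx =>
    rw [smul_eq_C_mul, Derivation.leibniz, S.hD_C, smul_eq_mul, smul_eq_mul, ← smul_eq_C_mul,
      mul_comm, ← smul_eq_C_mul]
    exact add_mem (Submodule.smul_mem _ _ ihx) (Submodule.smul_mem _ _ hx)

theorem iterate_D_H_mem_uLinear (i : Fin n) (k : ℕ) : (⇑S.D)^[k] (S.H i) ∈ uLinear K n := by
  induction k with
  | zero => exact S.H_mem_uLinear i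
  | succ k ih => rw [Function.iterate_succ_apply']; exact S.D_mem_uLinear ih

theorem iterate_D_F (i : Fin n) (k : ℕ) :
    (⇑S.D)^[k] (S.F i) = X (Sum.inl i, k) - C ((⇑S.der)^[k] (S.a i)) + (⇑S.D)^[k] (S.H i) := by
  have hC : Function.Semiconj C S.der S.D := fun c => (S.hD_C c).symm
  have hX : Function.Semiconj (fun k => (X (Sum.inl i, k) : R K n)) Nat.succ S.D :=
    fun k => (S.hD_X _ k).symm
  rw [F, iterate_map_add, iterate_map_sub, ← (hC.iterate_right k).eq, ← (hX.iterate_right k).eq,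
    Nat.succ_iterate, zero_add]

/-- The elements `∂^k Fᵢ` of `PS`, indexed by the rows of `M(L)`. -/
noncomputable def psFam : S.RI → R K n := fun ik => (⇑S.D)^[ik.2] (S.F ik.1)

theorem range_psFam : Set.range S.psFam = S.PSset := by
  ext g
  constructor
  · rintro ⟨⟨i, k⟩, rfl⟩
    exact ⟨i, k, Nat.lt_succ_iff.1 k.2, rfl⟩
  · rintro ⟨i, k, hk, rfl⟩
    exact ⟨⟨i, ⟨k, Nat.lt_succ_iff.2 hk⟩⟩, rfl⟩

theorem totalDegree_psFam_le (ik : S.RI) : (S.psFam ik).totalDegree ≤ 1 := by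
  rw [psFam, iterate_D_F]
  refine (totalDegree_add _ _).trans (max_le ((totalDegree_sub _ _).trans (max_le ?_ ?_))
    (totalDegree_le_one_of_mem_uLinear (S.iterate_D_H_mem_uLinear _ _)))
  · exact (totalDegree_X _).le
  · simp

theorem hasPivots_psFam : HasPivots S.psFam fun ik => (Sum.inl ik.1, (ik.2 : ℕ)) := by
  have hcoeff : ∀ ik jl : S.RI, coeff (Finsupp.single (Sum.inl ik.1, (ik.2 : ℕ)) 1)
      (S.psFam jl) = if ik = jl then 1 else 0 := by
    rintro ⟨i, k⟩ ⟨j, l⟩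
    rw [psFam, iterate_D_F, coeff_add, coeff_sub, coeff_C,
      coeff_inl_eq_zero_of_mem_uLinear (S.iterate_D_H_mem_uLinear _ _), coeff_X,
      if_neg (Finsupp.single_ne_zero.2 one_ne_zero).symm, sub_zero, add_zero]
    rcases eq_or_ne (⟨i, k⟩ : S.RI) ⟨j, l⟩ with h | h
    · cases h
      simp
    · have hne : j = i → (l : ℕ) ≠ k := by
        rintro rfl hlk
        exact h (by rw [Fin.ext hlk])
      simpa [h, Finsupp.single_left_inj] using hne
  exact ⟨fun ik => by simp [hcoeff], fun ik jl h => by simp [hcoeff, h]⟩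

theorem finrank_span_psFam : Module.finrank K (Submodule.span K (Set.range S.psFam)) = S.L := by
  rw [finrank_span_eq_card S.hasPivots_psFam.linearIndependent, Fintype.card_sigma, L]
  simp

end Sys

theorem rkk_inl_lt_rkk_inr (i : Fin n) (k : ℕ) (j : Fin (n - 1)) (m : ℕ) :
    rkk (Sum.inl i, k) < rkk (Sum.inr j, m) :=
  Prod.Lex.toLex_lt_toLex.2 (Or.inl Bool.false_lt_true)

noncomputable def Sys.uCoeffs (S : Sys K n) : R K n →ₗ[K] (S.CI → K) :=
  LinearMap.pi fun c => lcoeff K (Finsupp.single (Sum.inr c.1, (c.2 : ℕ)) 1)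

theorem Sys.row_Mprin (S : Sys K n) : S.Mprin.row = S.uCoeffs ∘ S.psFam := rfl

theorem Sys.uCoeffs_eq_zero_of_xOnly (S : Sys K n) {f : R K n} (hf : xOnly f) :
    S.uCoeffs f = 0 :=
  funext fun c => by_contra fun h => by simpa using hf _ (mem_vars_of_coeff_single_ne_zero_s3 h)

namespace Sys.IsAssocGB

variable {S : Sys K n} {G : Finset (R K n)}

noncomputable def lead (hG : S.IsAssocGB G) (g : G) : Vr n := (hG.2.2.1 g g.2).choose

variable (hG : S.IsAssocGB G)
include hG

theorem lead_spec (g : G) :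
    IsLead g.1 (hG.lead g) ∧ cf g.1 (hG.lead g).1 (hG.lead g).2 = 1 ∧
      ∀ g' ∈ G, g' ≠ g → hG.lead g ∉ g'.vars :=
  (hG.2.2.1 g g.2).choose_spec

theorem hasPivots : HasPivots ((↑) : G → R K n) hG.lead :=
  ⟨fun g => (hG.lead_spec g).2.1, fun g g' hne => by_contra fun h =>
    (hG.lead_spec g).2.2 g' g'.2 (Subtype.coe_injective.ne hne.symm)
      (mem_vars_of_coeff_single_ne_zero_s3 h)⟩

theorem span_eq_span_psFam :
    Submodule.span K (G : Set (R K n)) = Submodule.span K (Set.range S.psFam) := by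
  have hrange : Set.range ((↑) : G → R K n) = G := Subtype.range_coe
  apply le_antisymm <;> rw [Submodule.span_le]
  · intro g hg
    obtain ⟨-, hlin, -, hI⟩ := hG.1 g hg
    exact S.hasPivots_psFam.mem_span_of_mem_ideal S.totalDegree_psFam_le hlin
      (S.range_psFam ▸ hI)
  · rintro _ ⟨ik, rfl⟩
    rw [← hrange]
    refine hG.hasPivots.mem_span_of_mem_ideal (fun g => (hG.1 g g.2).2.1)
      (S.totalDegree_psFam_le ik) ?_
    rw [hrange, hG.2.1, ← S.range_psFam]
    exact Ideal.subset_span ⟨ik, rfl⟩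

theorem card_eq_L : G.card = S.L := by
  have := linearIndependent_iff_card_eq_finrank_span.1 hG.hasPivots.linearIndependent
  rwa [Subtype.range_coe, Set.finrank, hG.span_eq_span_psFam, S.finrank_span_psFam,
    Fintype.card_coe] at this

theorem exists_lead_eq_inr (g : G) (hg : ¬xOnly g.1) :
    ∃ c : S.CI, hG.lead g = (Sum.inr c.1, (c.2 : ℕ)) := by
  obtain ⟨w, hw, hwl⟩ : ∃ w ∈ g.1.vars, ¬(w.1).isLeft := by simpa [xOnly] using hg
  obtain ⟨hlead, -, -⟩ := hG.lead_spec g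
  rcases h : hG.lead g with ⟨i | j, m⟩
  · obtain ⟨i' | j', k⟩ := w
    · simp at hwl
    · have := hlead.2 _ hw
      rw [h] at this
      exact absurd this (rkk_inl_lt_rkk_inr _ _ _ _).not_ge
  · have hm : m ≤ S.Nn - S.gam j - S.gamT := (hG.1 g g.2).2.2.1 (Sum.inr j, m) (h ▸ hlead.1)
    exact ⟨⟨j, ⟨m, Nat.lt_succ_iff.2 hm⟩⟩, rfl⟩

open Classical in
theorem rank_Mprin : S.Mprin.rank = (G.filter fun g => ¬xOnly g).card := by
  set G₁ := G.filter fun g => ¬xOnly g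
  have hsub : ∀ g : G₁, g.1 ∈ G := fun g => (Finset.mem_filter.1 g.2).1
  choose c hc using fun g : G₁ =>
    hG.exists_lead_eq_inr ⟨g, hsub g⟩ (Finset.mem_filter.1 g.2).2
  have hpiv : HasPivots ((↑) : G₁ → R K n) fun g => hG.lead ⟨g, hsub g⟩ :=
    hG.hasPivots.comp (e := fun g : G₁ => ⟨g, hsub g⟩)
      fun _ _ h => Subtype.ext (congrArg (Subtype.val : G → R K n) h)
  have hind : LinearIndependent K (S.uCoeffs ∘ ((↑) : G₁ → R K n)) :=
    hpiv.linearIndependent_comp S.uCoeffs (fun g => LinearMap.proj (c g))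
      fun g f => by simp [hc, uCoeffs]
  have hspan : Submodule.span K (S.uCoeffs '' G) = Submodule.span K (S.uCoeffs '' G₁) := by
    refine le_antisymm (Submodule.span_le.2 ?_) (Submodule.span_mono (Set.image_mono
      (Finset.coe_subset.2 (Finset.filter_subset _ _))))
    rintro _ ⟨g, hg, rfl⟩
    by_cases hx : xOnly g
    · rw [S.uCoeffs_eq_zero_of_xOnly hx]
      exact zero_mem _
    · exact Submodule.subset_span ⟨g, Finset.mem_filter.2 ⟨hg, hx⟩, rfl⟩
  rw [Matrix.rank_eq_finrank_span_row, S.row_Mprin, Set.range_comp, Submodule.span_image,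
    ← hG.span_eq_span_psFam, ← Submodule.span_image, hspan, ← Fintype.card_coe,
    ← finrank_span_eq_card hind, Set.range_comp, Subtype.range_coe_subtype, Finset.setOfPred_mem]

end Sys.IsAssocGB

/-- The number of elements of `G₀ = G ∩ K{X}` equals
`L - rank(M_{L-1})`, where `M_{L-1}` is the principal matrix of `𝒫(X,U)`. -/
theorem statement_3 {K : Type} [Field K] {n : ℕ} (S : Sys K n) (G : Finset (R K n))
    (hG : S.IsAssocGB G) :
    (G0 G).card = S.L - S.Mprin.rank := by
  classical
  have hsplit := Finset.card_filter_add_card_filter_not (s := G) (fun g => xOnly g)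
  rw [← hG.card_eq_L, hG.rank_Mprin, ← hsplit, G0, Finset.filter_congr_decidable]
  exact (Nat.add_sub_cancel_right _ _).symm

end DPPE
end
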